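/- For all integers n ≥ 0 and all t ∈ ℝ, the matrices Rₙ(t) satisfy Givental's recursion relations: d/dt (Rₙ(t))₊₊ = −(i/4)·(Rₙ(t))₋₊; d/dt (Rₙ(t))₋₋ = (i/4)·(Rₙ(t))₊₋; (R_{n+1}(t))₋₊ = −(1/2)·exp(-t/2)·( d/dt (Rₙ(t))₋₊ − (i/4)·(Rₙ(t))₊₊ ); and (R_{n+1}(t))₊₋ = (1/2)·exp(-t/2)·( d/dt (Rₙ(t))₊₋ + (i/4)·(Rₙ(t))₋₋ ). -/

import Mathlib

/-- `α₀ = 1` and, for `n ≥ 1`, `αₙ = ((-1)ⁿ/(8ⁿ·n!))·∏_{ℓ=1}^{n}(2ℓ-1)²`. -/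
noncomputable def alph (n : ℕ) : ℝ :=
  ((-1) ^ n / (8 ^ n * Nat.factorial n)) * ∏ ℓ ∈ Finset.range n, ((2 * (ℓ : ℝ) + 1)) ^ 2

/-- The coefficient matrices of Givental's fundamental solution for ℙ¹:
`R₀(t) = I` and, for `n ≥ 1`,
`Rₙ(t) = ((-1)ⁿ·αₙ/((2n-1)·2ⁿ))·exp(-n·t/2)·Mₙ` with
`(Mₙ)₊₊ = −1`, `(Mₙ)₊₋ = (-1)^{n+1}·2n·i`, `(Mₙ)₋₊ = 2n·i`,
`(Mₙ)₋₋ = (-1)^{n+1}` (index `+` is `0`, index `−` is `1`). -/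
noncomputable def RM : ℕ → ℝ → Matrix (Fin 2) (Fin 2) ℂ
  | 0, _ => 1
  | (n + 1), t =>
      (((-1 : ℂ) ^ (n + 1) * ((alph (n + 1) : ℝ) : ℂ) /
          ((2 * ((n : ℂ) + 1) - 1) * 2 ^ (n + 1))) *
        ((Real.exp (-(((n : ℝ) + 1)) * t / 2) : ℝ) : ℂ)) •
      !![-1, (-1 : ℂ) ^ (n + 2) * (2 * ((n : ℂ) + 1)) * Complex.I;
         (2 * ((n : ℂ) + 1)) * Complex.I, (-1 : ℂ) ^ (n + 2)]

/-! Each `Rₙ(t)` is `exp(-n t/2)` times a constant matrix, so `d/dt Rₙ = -(n/2) Rₙ` and all four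
relations become algebraic identities. The two derivative relations hold entrywise for the sign
pattern of `Mₙ` (using `i² = -1`); the two recursions reduce to the ratio
`(2n+1)(2n+3)/(16(n+2))` between the scalar prefactors of `R_{n+2}` and `R_{n+1}`, which comes
from `αₙ₊₁/αₙ = -(2n+1)²/(8(n+1))`. -/

open Complex

lemma alph_succ (n : ℕ) :
    alph (n + 1) = alph n * (-(2 * (n : ℝ) + 1) ^ 2 / (8 * ((n : ℝ) + 1))) := by
  unfold alph
  rw [Finset.prod_range_succ, Nat.factorial_succ]
  push_cast
  field_simp
  ring

noncomputable def rCoeff (n : ℕ) : ℂ :=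
  (-1 : ℂ) ^ (n + 1) * ((alph (n + 1) : ℝ) : ℂ) / ((2 * ((n : ℂ) + 1) - 1) * 2 ^ (n + 1))

lemma rCoeff_zero : rCoeff 0 = 1 / 16 := by
  norm_num [rCoeff, alph]

lemma rCoeff_succ (n : ℕ) :
    rCoeff (n + 1) = (2 * n + 1) * (2 * n + 3) / (16 * (n + 2)) * rCoeff n := by
  have h₁ : (2 * (n : ℂ) + 1) ≠ 0 := by exact_mod_cast (by omega : 2 * n + 1 ≠ 0)
  have h₂ : ((n : ℂ) + 2) ≠ 0 := by exact_mod_cast (by omega : n + 2 ≠ 0)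
  have h₃ : (2 * (n : ℂ) + 3) ≠ 0 := by exact_mod_cast (by omega : 2 * n + 3 ≠ 0)
  unfold rCoeff
  rw [alph_succ (n + 1)]
  push_cast
  rw [show 2 * ((n : ℂ) + 1 + 1) - 1 = 2 * n + 3 by ring,
    show 2 * ((n : ℂ) + 1) - 1 = 2 * n + 1 by ring, show (n : ℂ) + 1 + 1 = n + 2 by ring]
  field_simp
  ring

lemma RM_succ (n : ℕ) (t : ℝ) :
    RM (n + 1) t = (rCoeff n * ((Real.exp (-((n : ℝ) + 1) * t / 2) : ℝ) : ℂ)) •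
      !![-1, (-1 : ℂ) ^ (n + 2) * (2 * ((n : ℂ) + 1)) * I;
         (2 * ((n : ℂ) + 1)) * I, (-1 : ℂ) ^ (n + 2)] :=
  rfl

lemma RM_succ_apply_zero_zero (n : ℕ) (t : ℝ) :
    RM (n + 1) t 0 0 = rCoeff n * ((Real.exp (-((n : ℝ) + 1) * t / 2) : ℝ) : ℂ) * -1 :=
  rfl

lemma RM_succ_apply_zero_one (n : ℕ) (t : ℝ) :
    RM (n + 1) t 0 1 = rCoeff n * ((Real.exp (-((n : ℝ) + 1) * t / 2) : ℝ) : ℂ) *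
      ((-1) ^ (n + 2) * (2 * ((n : ℂ) + 1)) * I) :=
  rfl

lemma RM_succ_apply_one_zero (n : ℕ) (t : ℝ) :
    RM (n + 1) t 1 0 = rCoeff n * ((Real.exp (-((n : ℝ) + 1) * t / 2) : ℝ) : ℂ) *
      (2 * ((n : ℂ) + 1) * I) :=
  rfl

lemma RM_succ_apply_one_one (n : ℕ) (t : ℝ) :
    RM (n + 1) t 1 1 = rCoeff n * ((Real.exp (-((n : ℝ) + 1) * t / 2) : ℝ) : ℂ) * (-1) ^ (n + 2) :=
  rfl

lemma hasDerivAt_ofReal_exp_mul_div_two (a t : ℝ) :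
    HasDerivAt (fun s : ℝ => ((Real.exp (a * s / 2) : ℝ) : ℂ))
      ((a / 2 : ℂ) * ((Real.exp (a * t / 2) : ℝ) : ℂ)) t :=
  (((hasDerivAt_id' t).const_mul a).div_const 2).exp.ofReal_comp.congr_deriv (by push_cast; ring)

lemma hasDerivAt_RM_apply (n : ℕ) (i j : Fin 2) (t : ℝ) :
    HasDerivAt (fun s => RM n s i j) (-((n : ℂ) / 2) * RM n t i j) t := by
  cases n with
  | zero => simpa [RM] using hasDerivAt_const t ((1 : Matrix (Fin 2) (Fin 2) ℂ) i j)
  | succ n =>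
    simp only [RM_succ, Matrix.smul_apply, smul_eq_mul]
    refine (((hasDerivAt_ofReal_exp_mul_div_two (-((n : ℝ) + 1)) t).const_mul
      (rCoeff n)).mul_const _).congr_deriv ?_
    push_cast
    ring

lemma ofReal_exp_neg_add_one_mul_div_two (x t : ℝ) :
    ((Real.exp (-(x + 1) * t / 2) : ℝ) : ℂ) =
      ((Real.exp (-t / 2) : ℝ) : ℂ) * ((Real.exp (-x * t / 2) : ℝ) : ℂ) := by
  rw [← ofReal_mul, ← Real.exp_add]
  congr 2
  ring

lemma neg_half_mul_RM_apply_zero_zero (n : ℕ) (t : ℝ) :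
    -((n : ℂ) / 2) * RM n t 0 0 = -(I / 4) * RM n t 1 0 := by
  cases n with
  | zero => simp [RM]
  | succ n =>
    rw [RM_succ_apply_zero_zero, RM_succ_apply_one_zero, Nat.cast_succ]
    linear_combination (((n : ℂ) + 1) / 2 * rCoeff n * Real.exp (-((n : ℝ) + 1) * t / 2)) * I_sq

lemma neg_half_mul_RM_apply_one_one (n : ℕ) (t : ℝ) :
    -((n : ℂ) / 2) * RM n t 1 1 = (I / 4) * RM n t 0 1 := by
  cases n with
  | zero => simp [RM]
  | succ n =>
    rw [RM_succ_apply_one_one, RM_succ_apply_zero_one, Nat.cast_succ]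
    linear_combination
      (-(-1) ^ n * ((n : ℂ) + 1) / 2 * rCoeff n * Real.exp (-((n : ℝ) + 1) * t / 2)) * I_sq

lemma RM_succ_one_zero_recursion (n : ℕ) (t : ℝ) :
    RM (n + 1) t 1 0 = -(1 / 2) * ((Real.exp (-t / 2) : ℝ) : ℂ) *
      (-((n : ℂ) / 2) * RM n t 1 0 - (I / 4) * RM n t 0 0) := by
  cases n with
  | zero =>
    rw [RM_succ_apply_one_zero, rCoeff_zero]
    simp [RM]
    ring
  | succ n =>
    have h : ((n : ℂ) + 2) ≠ 0 := by exact_mod_cast (by omega : n + 2 ≠ 0)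
    rw [RM_succ_apply_one_zero, RM_succ_apply_one_zero, RM_succ_apply_zero_zero, rCoeff_succ,
      ofReal_exp_neg_add_one_mul_div_two]
    push_cast [-ofReal_exp]
    field_simp
    ring

lemma RM_succ_zero_one_recursion (n : ℕ) (t : ℝ) :
    RM (n + 1) t 0 1 = (1 / 2) * ((Real.exp (-t / 2) : ℝ) : ℂ) *
      (-((n : ℂ) / 2) * RM n t 0 1 + (I / 4) * RM n t 1 1) := by
  cases n with
  | zero =>
    rw [RM_succ_apply_zero_one, rCoeff_zero]
    simp [RM]
    ring
  | succ n =>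
    have h : ((n : ℂ) + 2) ≠ 0 := by exact_mod_cast (by omega : n + 2 ≠ 0)
    rw [RM_succ_apply_zero_one, RM_succ_apply_zero_one, RM_succ_apply_one_one, rCoeff_succ,
      ofReal_exp_neg_add_one_mul_div_two]
    push_cast [-ofReal_exp]
    field_simp
    ring

/-- For all `n ≥ 0` and all real `t`, the matrices `Rₙ(t)` satisfy Givental's
recursion relations:
`d/dt (Rₙ)₊₊ = −(i/4)·(Rₙ)₋₊`, `d/dt (Rₙ)₋₋ = (i/4)·(Rₙ)₊₋`,
`(R_{n+1})₋₊ = −(1/2)·exp(-t/2)·(d/dt (Rₙ)₋₊ − (i/4)·(Rₙ)₊₊)`, and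
`(R_{n+1})₊₋ = (1/2)·exp(-t/2)·(d/dt (Rₙ)₊₋ + (i/4)·(Rₙ)₋₋)`. -/
theorem stmt8 (n : ℕ) (t : ℝ) :
    HasDerivAt (fun s => RM n s 0 0) (-(Complex.I / 4) * RM n t 1 0) t ∧
    HasDerivAt (fun s => RM n s 1 1) ((Complex.I / 4) * RM n t 0 1) t ∧
    (∃ d : ℂ, HasDerivAt (fun s => RM n s 1 0) d t ∧
      RM (n + 1) t 1 0 =
        -(1 / 2) * ((Real.exp (-t / 2) : ℝ) : ℂ) * (d - (Complex.I / 4) * RM n t 0 0)) ∧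
    (∃ d : ℂ, HasDerivAt (fun s => RM n s 0 1) d t ∧
      RM (n + 1) t 0 1 =
        (1 / 2) * ((Real.exp (-t / 2) : ℝ) : ℂ) * (d + (Complex.I / 4) * RM n t 1 1)) :=
  ⟨(hasDerivAt_RM_apply n 0 0 t).congr_deriv (neg_half_mul_RM_apply_zero_zero n t),
    (hasDerivAt_RM_apply n 1 1 t).congr_deriv (neg_half_mul_RM_apply_one_one n t),
    ⟨_, hasDerivAt_RM_apply n 1 0 t, RM_succ_one_zero_recursion n t⟩,
    ⟨_, hasDerivAt_RM_apply n 0 1 t, RM_succ_zero_one_recursion n t⟩⟩
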